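/- In the setting f(X,y) = g(𝒜X + y) + ⟨C,X⟩ + ⟨c,y⟩, with g strongly convex and smooth, K convex compact, suppose the (constant-over-optima) partial gradient ∇_X f* satisfies λ_{n-1}(∇_X f*) − λ_n(∇_X f*) = δ > 0. Then the problem min_{(X,y)∈S_n×K} f(X,y) admits a unique optimal solution (X*, y*), and X* = x*x*ᵀ is rank-one. -/

import Mathlib

/-!
The partial gradient `G = 𝒜ᵀ∇g(𝒜X* + y*) + C` is the same at every optimum, because strong
convexity of `g` forces `𝒜X + y` to be constant on the optimal set (compare the objective at the
midpoint of two optima). Each optimal `X` minimises the linearisation `⟨G, ·⟩` over the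
spectrahedron, by the first-order condition for the smooth function `X ↦ g(𝒜X + y) + ⟨C, X⟩`. In an
eigenbasis of `G` this linear function is a convex combination of the eigenvalues, so when the
smallest eigenvalue is simple its only minimiser is the projection `x xᵀ` onto the bottom
eigenvector. Hence all optimal `X` equal `x xᵀ`, and then all optimal `y` coincide too.
-/

open Matrix
open scoped RealInnerProductSpace

noncomputable section

/-- Trace (Frobenius) inner product on real square matrices. -/
def tinner {n : ℕ} (A B : Matrix (Fin n) (Fin n) ℝ) : ℝ := ∑ i, ∑ j, A i j * B i j

/-- Squared Frobenius norm. -/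
def frobSq {n : ℕ} (A : Matrix (Fin n) (Fin n) ℝ) : ℝ := ∑ i, ∑ j, (A i j)^2

/-- Frobenius norm. -/
def frobNorm {n : ℕ} (A : Matrix (Fin n) (Fin n) ℝ) : ℝ := Real.sqrt (frobSq A)

/-- The spectrahedron: positive semidefinite matrices with unit trace. -/
def Spectra (n : ℕ) : Set (Matrix (Fin n) (Fin n) ℝ) :=
  {X | X.PosSemidef ∧ X.trace = 1}

/-- Eigenvalues of a symmetric matrix sorted in non-decreasing order, so that
`sortedEigs hA 0` is the smallest eigenvalue (λ_n in the paper's non-increasing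
convention), `sortedEigs hA 1` is the second smallest (λ_{n-1}), and in general
`sortedEigs hA i = λ_{n-i}`. -/
def sortedEigs {n : ℕ} {A : Matrix (Fin n) (Fin n) ℝ} (hA : A.IsHermitian) : Fin n → ℝ :=
  hA.eigenvalues ∘ Tuple.sort hA.eigenvalues

open Filter Topology

section Frobenius

variable {m : ℕ}

lemma tinner_add_left (A B C : Matrix (Fin m) (Fin m) ℝ) :
    tinner (A + B) C = tinner A C + tinner B C := by
  simp [tinner, add_mul, Finset.sum_add_distrib]

lemma tinner_add_right (A B C : Matrix (Fin m) (Fin m) ℝ) :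
    tinner A (B + C) = tinner A B + tinner A C := by
  simp [tinner, mul_add, Finset.sum_add_distrib]

lemma tinner_sub_right (A B C : Matrix (Fin m) (Fin m) ℝ) :
    tinner A (B - C) = tinner A B - tinner A C := by
  simp [tinner, mul_sub, Finset.sum_sub_distrib]

lemma tinner_smul_right (A : Matrix (Fin m) (Fin m) ℝ) (t : ℝ) (B : Matrix (Fin m) (Fin m) ℝ) :
    tinner A (t • B) = t * tinner A B := by
  simp [tinner, Finset.mul_sum, mul_left_comm]

lemma tinner_eq_trace (A B : Matrix (Fin m) (Fin m) ℝ) : tinner A B = (Aᵀ * B).trace := by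
  simp only [tinner, trace, diag_apply, mul_apply, transpose_apply]
  rw [Finset.sum_comm]

lemma tinner_vecMulVec (A : Matrix (Fin m) (Fin m) ℝ) (x : Fin m → ℝ) :
    tinner A (vecMulVec x x) = x ⬝ᵥ A *ᵥ x := by
  simp only [tinner, vecMulVec_apply, dotProduct, mulVec, Finset.mul_sum]
  exact Finset.sum_congr rfl fun i _ => Finset.sum_congr rfl fun j _ => by ring

end Frobenius

section Spectrahedron

variable {m : ℕ}

lemma convex_spectra : Convex ℝ (Spectra m) := by
  intro X hX Y hY a b ha hb hab
  refine ⟨(hX.1.smul ha).add (hY.1.smul hb), ?_⟩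
  simp [trace_add, trace_smul, hX.2, hY.2, hab]

lemma vecMulVec_mem_spectra {x : Fin m → ℝ} (hx : ∑ i, x i ^ 2 = 1) :
    vecMulVec x x ∈ Spectra m := by
  refine ⟨by simpa using posSemidef_vecMulVec_self_star x, ?_⟩
  simpa [trace, vecMulVec_apply, sq] using hx

end Spectrahedron

lemma eq_zero_of_sum_mul_le_of_lt {ι : Type*} [Fintype ι] {lam w : ι → ℝ} {i₀ : ι}
    (hgap : ∀ j ≠ i₀, lam i₀ < lam j) (hw : ∀ i, 0 ≤ w i) (hsum : ∑ i, w i = 1)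
    (hle : ∑ i, lam i * w i ≤ lam i₀) {j : ι} (hj : j ≠ i₀) : w j = 0 := by
  have hterm : ∀ i ∈ Finset.univ, 0 ≤ (lam i - lam i₀) * w i := fun i _ => by
    rcases eq_or_ne i i₀ with rfl | hi
    · simp
    · exact mul_nonneg (sub_nonneg.2 (hgap i hi).le) (hw i)
  have htotal : ∑ i, (lam i - lam i₀) * w i = ∑ i, lam i * w i - lam i₀ := by
    simp only [sub_mul, Finset.sum_sub_distrib, ← Finset.mul_sum, hsum, mul_one]
  have hzero := (Finset.sum_eq_zero_iff_of_nonneg hterm).1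
    (le_antisymm (by linarith) (Finset.sum_nonneg hterm)) j (Finset.mem_univ j)
  exact (mul_eq_zero.1 hzero).resolve_left (sub_ne_zero.2 (hgap j hj).ne')

open scoped ComplexOrder in
lemma Matrix.PosSemidef.eq_single_of_diag_eq_zero {𝕜 ι : Type*} [RCLike 𝕜] [Fintype ι]
    [DecidableEq ι] {Y : Matrix ι ι 𝕜} (hY : Y.PosSemidef) {i₀ : ι}
    (hdiag : ∀ j ≠ i₀, Y j j = 0) : Y = single i₀ i₀ (Y i₀ i₀) := by
  have hcol : ∀ i, ∀ j ≠ i₀, Y i j = 0 := fun i j hj => by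
    have h := (hY.dotProduct_mulVec_zero_iff (Pi.single j 1)).1 (by simp [hdiag j hj])
    simpa using congrFun h i
  ext i j
  rcases eq_or_ne j i₀ with rfl | hj
  · rcases eq_or_ne i j with rfl | hi
    · simp
    · rw [← hY.1.apply i j, hcol j i hi, star_zero, single_apply_of_row_ne hi.symm]
  · rw [hcol i j hj, single_apply_of_col_ne _ _ hj.symm]

namespace Matrix.IsHermitian

variable {m : ℕ} {G : Matrix (Fin m) (Fin m) ℝ} (hG : G.IsHermitian)

lemma sum_eigenvectorBasis_sq (i : Fin m) : ∑ j, hG.eigenvectorBasis i j ^ 2 = 1 := by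
  rw [← EuclideanSpace.real_norm_sq_eq, hG.eigenvectorBasis.orthonormal.1 i, one_pow]

lemma tinner_vecMulVec_eigenvectorBasis (i : Fin m) :
    tinner G (vecMulVec (hG.eigenvectorBasis i) (hG.eigenvectorBasis i)) = hG.eigenvalues i := by
  rw [tinner_vecMulVec, hG.eigenvalues_eq i]
  simp

lemma tinner_eq_sum_eigenvalues_mul (X : Matrix (Fin m) (Fin m) ℝ) :
    tinner G X = ∑ i, hG.eigenvalues i * (star (hG.eigenvectorUnitary : Matrix (Fin m) (Fin m) ℝ)
      * X * hG.eigenvectorUnitary) i i := by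
  set U : Matrix (Fin m) (Fin m) ℝ := (hG.eigenvectorUnitary : Matrix (Fin m) (Fin m) ℝ)
  have hspec : G = U * diagonal hG.eigenvalues * star U := by
    simpa using hG.spectral_theorem
  calc tinner G X = (U * (diagonal hG.eigenvalues * (star U * X))).trace := by
        rw [tinner_eq_trace, show Gᵀ = G from hG]
        conv_lhs => rw [hspec]
        simp only [Matrix.mul_assoc]
    _ = (diagonal hG.eigenvalues * (star U * X * U)).trace := by
        rw [trace_mul_comm, Matrix.mul_assoc, Matrix.mul_assoc]
    _ = _ := by simp [trace, diagonal_mul]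

lemma eq_vecMulVec_eigenvectorBasis_of_tinner_le {i₀ : Fin m}
    (hgap : ∀ j ≠ i₀, hG.eigenvalues i₀ < hG.eigenvalues j) {X : Matrix (Fin m) (Fin m) ℝ}
    (hX : X ∈ Spectra m) (hle : tinner G X ≤ hG.eigenvalues i₀) :
    X = vecMulVec (hG.eigenvectorBasis i₀) (hG.eigenvectorBasis i₀) := by
  set U : Matrix (Fin m) (Fin m) ℝ := (hG.eigenvectorUnitary : Matrix (Fin m) (Fin m) ℝ)
  have hUU : U * star U = 1 := mem_unitaryGroup_iff.1 hG.eigenvectorUnitary.2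
  set Y := star U * X * U with hY
  have hYpsd : Y.PosSemidef := by
    rw [hY, star_eq_conjTranspose]
    exact hX.1.conjTranspose_mul_mul_same U
  have hYtr : Y.trace = 1 := by rw [hY, trace_mul_cycle, hUU, Matrix.one_mul, hX.2]
  have hdiag : ∀ j ≠ i₀, Y j j = 0 := fun j hj =>
    eq_zero_of_sum_mul_le_of_lt hgap (fun _ => hYpsd.diag_nonneg) hYtr
      (hG.tinner_eq_sum_eigenvalues_mul X ▸ hle) hj
  have hY₁ : Y i₀ i₀ = 1 := by
    rw [← hYtr, trace]
    exact (Finset.sum_eq_single i₀ (fun j _ hj => hdiag j hj) (by simp)).symm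
  have hXY : X = U * Y * star U := by
    simp only [hY, Matrix.mul_assoc, hUU, Matrix.mul_one]
    simp only [← Matrix.mul_assoc, hUU, Matrix.one_mul]
  rw [hXY, hYpsd.eq_single_of_diag_eq_zero hdiag, hY₁, single_eq_single_vecMulVec_single,
    mul_vecMulVec, vecMulVec_mul, eigenvectorUnitary_mulVec, single_one_vecMul]
  -- `star` is trivial on `ℝ`, so row `i₀` of `star U` is column `i₀` of `U`
  rfl

end Matrix.IsHermitian

lemma Tuple.lt_apply_sort_zero {α : Type*} [LinearOrder α] {k : ℕ} (f : Fin (k + 2) → α)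
    (h : f (Tuple.sort f 0) < f (Tuple.sort f 1)) {j : Fin (k + 2)}
    (hj : j ≠ Tuple.sort f 0) : f (Tuple.sort f 0) < f j := by
  obtain ⟨i, rfl⟩ := (Tuple.sort f).surjective j
  have hi : 1 ≤ i := Fin.one_le_of_ne_zero fun hi => hj (congrArg _ hi)
  exact h.trans_le (Tuple.monotone_sort f hi)

lemma nonneg_of_forall_mul_add_sq_nonneg {a b : ℝ}
    (h : ∀ t : ℝ, 0 < t → t ≤ 1 → 0 ≤ t * a + t ^ 2 * b) : 0 ≤ a := by
  have hlim : Tendsto (fun t : ℝ => a + t * b) (𝓝[>] 0) (𝓝 a) := by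
    have : Continuous fun t : ℝ => a + t * b := by fun_prop
    simpa using (this.tendsto 0).mono_left nhdsWithin_le_nhds
  refine ge_of_tendsto hlim ?_
  filter_upwards [Ioc_mem_nhdsGT one_pos] with t ⟨ht₀, ht₁⟩
  refine nonneg_of_mul_nonneg_right ?_ ht₀
  linarith [h t ht₀ ht₁]

lemma add_mul_norm_sub_sq_le_of_strongConvex {E : Type*} [NormedAddCommGroup E]
    [InnerProductSpace ℝ E] {g : E → ℝ} {Gg : E → E} {α : ℝ}
    (hsconv : ∀ z z', g z + ⟪Gg z, z' - z⟫ + α / 2 * ‖z' - z‖ ^ 2 ≤ g z') (z z' : E) :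
    g ((2⁻¹ : ℝ) • z + (2⁻¹ : ℝ) • z') + α / 8 * ‖z' - z‖ ^ 2 ≤ (g z + g z') / 2 := by
  set w := (2⁻¹ : ℝ) • z + (2⁻¹ : ℝ) • z'
  have hz : z - w = (-2⁻¹ : ℝ) • (z' - z) := by module
  have hz' : z' - w = (2⁻¹ : ℝ) • (z' - z) := by module
  have h := hsconv w z
  have h' := hsconv w z'
  rw [hz, inner_smul_right, norm_smul] at h
  rw [hz', inner_smul_right, norm_smul] at h'
  norm_num [mul_pow] at h h'
  linarith

section CompositeObjective

variable {m p : ℕ} {g : EuclideanSpace ℝ (Fin p) → ℝ}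
  {Gg : EuclideanSpace ℝ (Fin p) → EuclideanSpace ℝ (Fin p)}
  {A : Matrix (Fin m) (Fin m) ℝ →ₗ[ℝ] EuclideanSpace ℝ (Fin p)}
  {At : EuclideanSpace ℝ (Fin p) →ₗ[ℝ] Matrix (Fin m) (Fin m) ℝ}
  {C : Matrix (Fin m) (Fin m) ℝ} {c : EuclideanSpace ℝ (Fin p)}

def compositeObjective (g : EuclideanSpace ℝ (Fin p) → ℝ)
    (A : Matrix (Fin m) (Fin m) ℝ →ₗ[ℝ] EuclideanSpace ℝ (Fin p)) (C : Matrix (Fin m) (Fin m) ℝ)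
    (c : EuclideanSpace ℝ (Fin p)) (X : Matrix (Fin m) (Fin m) ℝ) (y : EuclideanSpace ℝ (Fin p)) :
    ℝ :=
  g (A X + y) + tinner C X + ⟪c, y⟫

lemma tinner_gradient_sub_nonneg_of_isMinOn {βg : ℝ}
    (hsmooth : ∀ z z', g z' ≤ g z + ⟪Gg z, z' - z⟫ + βg / 2 * ‖z' - z‖ ^ 2)
    (hadj : ∀ z M, ⟪z, A M⟫ = tinner (At z) M) {S : Set (Matrix (Fin m) (Fin m) ℝ)}
    (hS : Convex ℝ S) {y : EuclideanSpace ℝ (Fin p)} {X₀ X : Matrix (Fin m) (Fin m) ℝ}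
    (hmin : IsMinOn (fun X => g (A X + y) + tinner C X) S X₀) (hX₀ : X₀ ∈ S) (hX : X ∈ S) :
    0 ≤ tinner (At (Gg (A X₀ + y)) + C) (X - X₀) := by
  set z := A X₀ + y
  set d := A (X - X₀)
  rw [tinner_add_left, ← hadj]
  refine nonneg_of_forall_mul_add_sq_nonneg (b := βg / 2 * ‖d‖ ^ 2) fun t ht₀ ht₁ => ?_
  have hmem := hS.add_smul_sub_mem hX₀ hX ⟨ht₀.le, ht₁⟩
  have hAt : A (X₀ + t • (X - X₀)) + y = z + t • d := by
    simp only [z, d, map_add, map_smul]; abel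
  have hup := hsmooth z (z + t • d)
  rw [add_sub_cancel_left, inner_smul_right, norm_smul, mul_pow, Real.norm_eq_abs, sq_abs] at hup
  have hlow : g z + tinner C X₀ ≤ g (A (X₀ + t • (X - X₀)) + y) + tinner C (X₀ + t • (X - X₀)) :=
    hmin hmem
  rw [hAt, tinner_add_right, tinner_smul_right] at hlow
  nlinarith

lemma compositeObjective_midpoint_add_le {αg : ℝ}
    (hsconv : ∀ z z', g z + ⟪Gg z, z' - z⟫ + αg / 2 * ‖z' - z‖ ^ 2 ≤ g z')
    (X X' : Matrix (Fin m) (Fin m) ℝ) (y y' : EuclideanSpace ℝ (Fin p)) :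
    compositeObjective g A C c ((2⁻¹ : ℝ) • X + (2⁻¹ : ℝ) • X') ((2⁻¹ : ℝ) • y + (2⁻¹ : ℝ) • y')
        + αg / 8 * ‖(A X' + y') - (A X + y)‖ ^ 2
      ≤ (compositeObjective g A C c X y + compositeObjective g A C c X' y') / 2 := by
  have hmid : A ((2⁻¹ : ℝ) • X + (2⁻¹ : ℝ) • X') + ((2⁻¹ : ℝ) • y + (2⁻¹ : ℝ) • y')
      = (2⁻¹ : ℝ) • (A X + y) + (2⁻¹ : ℝ) • (A X' + y') := by
    simp only [map_add, map_smul]; module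
  have h := add_mul_norm_sub_sq_le_of_strongConvex hsconv (A X + y) (A X' + y')
  simp only [compositeObjective, hmid, tinner_add_right, tinner_smul_right, inner_add_right,
    real_inner_smul_right]
  linarith

lemma add_eq_of_compositeObjective_eq_min {αg : ℝ} (hαg : 0 < αg)
    (hsconv : ∀ z z', g z + ⟪Gg z, z' - z⟫ + αg / 2 * ‖z' - z‖ ^ 2 ≤ g z')
    {S : Set (Matrix (Fin m) (Fin m) ℝ)} {K : Set (EuclideanSpace ℝ (Fin p))}
    (hS : Convex ℝ S) (hK : Convex ℝ K) {Xs X : Matrix (Fin m) (Fin m) ℝ}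
    {ys y : EuclideanSpace ℝ (Fin p)}
    (hopt : ∀ X ∈ S, ∀ y ∈ K, compositeObjective g A C c Xs ys ≤ compositeObjective g A C c X y)
    (hXs : Xs ∈ S) (hys : ys ∈ K) (hX : X ∈ S) (hy : y ∈ K)
    (hval : compositeObjective g A C c X y = compositeObjective g A C c Xs ys) :
    A X + y = A Xs + ys := by
  have hmid := compositeObjective_midpoint_add_le (A := A) (C := C) (c := c) hsconv Xs X ys y
  have hXm : (2⁻¹ : ℝ) • Xs + (2⁻¹ : ℝ) • X ∈ S :=
    hS hXs hX (by norm_num) (by norm_num) (by norm_num)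
  have hym : (2⁻¹ : ℝ) • ys + (2⁻¹ : ℝ) • y ∈ K :=
    hK hys hy (by norm_num) (by norm_num) (by norm_num)
  have hmin := hopt _ hXm _ hym
  have hsq : ‖(A X + y) - (A Xs + ys)‖ ^ 2 = 0 :=
    le_antisymm (by nlinarith) (sq_nonneg _)
  simpa [sub_eq_zero] using hsq

lemma isMinOn_of_compositeObjective_eq_min {S : Set (Matrix (Fin m) (Fin m) ℝ)}
    {K : Set (EuclideanSpace ℝ (Fin p))} {Xs X : Matrix (Fin m) (Fin m) ℝ}
    {ys y : EuclideanSpace ℝ (Fin p)}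
    (hopt : ∀ X ∈ S, ∀ y ∈ K, compositeObjective g A C c Xs ys ≤ compositeObjective g A C c X y)
    (hy : y ∈ K) (hval : compositeObjective g A C c X y = compositeObjective g A C c Xs ys) :
    IsMinOn (fun X => g (A X + y) + tinner C X) S X := isMinOn_iff.2 fun X' hX' => by
  have := hval ▸ hopt X' hX' y hy
  simp only [compositeObjective] at this
  linarith

lemma eq_vecMulVec_eigenvectorBasis_of_isMinOn {βg : ℝ}
    (hsmooth : ∀ z z', g z' ≤ g z + ⟪Gg z, z' - z⟫ + βg / 2 * ‖z' - z‖ ^ 2)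
    (hadj : ∀ z M, ⟪z, A M⟫ = tinner (At z) M) {z : EuclideanSpace ℝ (Fin p)}
    (hG : (At (Gg z) + C).IsHermitian) {i₀ : Fin m}
    (hgap : ∀ j ≠ i₀, hG.eigenvalues i₀ < hG.eigenvalues j)
    {X : Matrix (Fin m) (Fin m) ℝ} {y : EuclideanSpace ℝ (Fin p)} (hz : A X + y = z)
    (hmin : IsMinOn (fun X => g (A X + y) + tinner C X) (Spectra m) X) (hX : X ∈ Spectra m) :
    X = vecMulVec (hG.eigenvectorBasis i₀) (hG.eigenvectorBasis i₀) := by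
  have h := tinner_gradient_sub_nonneg_of_isMinOn hsmooth hadj convex_spectra hmin hX
    (vecMulVec_mem_spectra (hG.sum_eigenvectorBasis_sq i₀))
  rw [hz, tinner_sub_right, hG.tinner_vecMulVec_eigenvectorBasis] at h
  exact hG.eq_vecMulVec_eigenvectorBasis_of_tinner_le hgap hX (by linarith)

end CompositeObjective

theorem stmt12_general {n p : ℕ}
    (g : EuclideanSpace ℝ (Fin p) → ℝ) (Gg : EuclideanSpace ℝ (Fin p) → EuclideanSpace ℝ (Fin p))
    (αg βg : ℝ) (hαg : 0 < αg)
    (hsconv : ∀ z z', g z + ⟪Gg z, z' - z⟫ + αg / 2 * ‖z' - z‖^2 ≤ g z')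
    (hsmooth : ∀ z z', g z' ≤ g z + ⟪Gg z, z' - z⟫ + βg / 2 * ‖z' - z‖^2)
    (A : Matrix (Fin (n+2)) (Fin (n+2)) ℝ →ₗ[ℝ] EuclideanSpace ℝ (Fin p))
    (At : EuclideanSpace ℝ (Fin p) →ₗ[ℝ] Matrix (Fin (n+2)) (Fin (n+2)) ℝ)
    (hadj : ∀ z M, ⟪z, A M⟫ = tinner (At z) M)
    (K : Set (EuclideanSpace ℝ (Fin p))) (hK : Convex ℝ K)
    (C : Matrix (Fin (n+2)) (Fin (n+2)) ℝ) (c : EuclideanSpace ℝ (Fin p))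
    (f : Matrix (Fin (n+2)) (Fin (n+2)) ℝ → EuclideanSpace ℝ (Fin p) → ℝ)
    (hf : ∀ X y, f X y = g (A X + y) + tinner C X + ⟪c, y⟫)
    (Xs : Matrix (Fin (n+2)) (Fin (n+2)) ℝ) (ys : EuclideanSpace ℝ (Fin p))
    (hfeas : Xs ∈ Spectra (n+2) ∧ ys ∈ K)
    (hopt : ∀ X ∈ Spectra (n+2), ∀ y ∈ K, f Xs ys ≤ f X y)
    (hG : (At (Gg (A Xs + ys)) + C).IsHermitian)
    (δ : ℝ) (hδ : δ = sortedEigs hG 1 - sortedEigs hG 0) (hδpos : 0 < δ) :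
    (∀ X ∈ Spectra (n+2), ∀ y ∈ K, f X y = f Xs ys → X = Xs ∧ y = ys) ∧
    ∃ x : Fin (n+2) → ℝ, (∑ i, (x i)^2 = 1) ∧ Xs = vecMulVec x x := by
  obtain rfl : f = compositeObjective g A C c := funext fun X => funext fun y => hf X y
  obtain ⟨hXs, hys⟩ := hfeas
  set i₀ := Tuple.sort hG.eigenvalues 0
  have hgap : ∀ j ≠ i₀, hG.eigenvalues i₀ < hG.eigenvalues j := fun j hj =>
    Tuple.lt_apply_sort_zero _ (by simpa [sortedEigs, hδ] using hδpos) hj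
  have hoptimal : ∀ X ∈ Spectra (n+2), ∀ y ∈ K,
      compositeObjective g A C c X y = compositeObjective g A C c Xs ys →
      A X + y = A Xs + ys ∧ X = vecMulVec (hG.eigenvectorBasis i₀) (hG.eigenvectorBasis i₀) := by
    intro X hX y hy hval
    have hz :=
      add_eq_of_compositeObjective_eq_min hαg hsconv convex_spectra hK hopt hXs hys hX hy hval
    exact ⟨hz, eq_vecMulVec_eigenvectorBasis_of_isMinOn hsmooth hadj hG hgap hz
      (isMinOn_of_compositeObjective_eq_min hopt hy hval) hX⟩
  have hXs_eq := (hoptimal Xs hXs ys hys rfl).2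
  refine ⟨fun X hX y hy hval => ?_, _, hG.sum_eigenvectorBasis_sq i₀, hXs_eq⟩
  obtain ⟨hz, hX_eq⟩ := hoptimal X hX y hy hval
  have hXXs : X = Xs := hX_eq.trans hXs_eq.symm
  exact ⟨hXXs, by rwa [hXXs, add_right_inj] at hz⟩

/-- In the setting `f(X,y) = g(𝒜X + y) + ⟨C,X⟩ + ⟨c,y⟩` with `g` strongly
convex and smooth and `K` convex compact, if the partial gradient `∇_X f* = 𝒜ᵀ∇g(𝒜X*+y*)+C`
at an optimum `(Xs, ys)` has a positive gap between its two smallest eigenvalues, then the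
optimal solution is unique and `Xs = x xᵀ` is rank-one for a unit vector `x`. -/
theorem stmt12 {n p : ℕ}
    (g : EuclideanSpace ℝ (Fin p) → ℝ) (Gg : EuclideanSpace ℝ (Fin p) → EuclideanSpace ℝ (Fin p))
    (αg βg : ℝ) (hαg : 0 < αg) (hβg : 0 < βg)
    (hsconv : ∀ z z', g z + ⟪Gg z, z' - z⟫ + αg / 2 * ‖z' - z‖^2 ≤ g z')
    (hsmooth : ∀ z z', g z' ≤ g z + ⟪Gg z, z' - z⟫ + βg / 2 * ‖z' - z‖^2)
    (A : Matrix (Fin (n+2)) (Fin (n+2)) ℝ →ₗ[ℝ] EuclideanSpace ℝ (Fin p))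
    (At : EuclideanSpace ℝ (Fin p) →ₗ[ℝ] Matrix (Fin (n+2)) (Fin (n+2)) ℝ)
    (hadj : ∀ z M, ⟪z, A M⟫ = tinner (At z) M)
    (K : Set (EuclideanSpace ℝ (Fin p))) (hK : Convex ℝ K) (hKcpt : IsCompact K)
    (C : Matrix (Fin (n+2)) (Fin (n+2)) ℝ) (c : EuclideanSpace ℝ (Fin p))
    (f : Matrix (Fin (n+2)) (Fin (n+2)) ℝ → EuclideanSpace ℝ (Fin p) → ℝ)
    (hf : ∀ X y, f X y = g (A X + y) + tinner C X + ⟪c, y⟫)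
    (Xs : Matrix (Fin (n+2)) (Fin (n+2)) ℝ) (ys : EuclideanSpace ℝ (Fin p))
    (hfeas : Xs ∈ Spectra (n+2) ∧ ys ∈ K)
    (hopt : ∀ X ∈ Spectra (n+2), ∀ y ∈ K, f Xs ys ≤ f X y)
    (hG : (At (Gg (A Xs + ys)) + C).IsHermitian)
    (δ : ℝ) (hδ : δ = sortedEigs hG 1 - sortedEigs hG 0) (hδpos : 0 < δ) :
    (∀ X ∈ Spectra (n+2), ∀ y ∈ K, f X y = f Xs ys → X = Xs ∧ y = ys) ∧
    ∃ x : Fin (n+2) → ℝ, (∑ i, (x i)^2 = 1) ∧ Xs = vecMulVec x x :=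
  stmt12_general g Gg αg βg hαg hsconv hsmooth A At hadj K hK C c f hf Xs ys hfeas hopt hG δ hδ
    hδpos
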